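/- Let q = 2^f with f odd, and let k₂ = F_{q²}. Then the number N₁ of elements y ∈ k₂ such that y + y² is a nonzero cube in k₂× equals (q² + 2q − 2)/3. -/

import Mathlib

/-!
Write `q = 2 ^ f`, `φ y = y + y ^ 2` and `R x = x ^ q + x`. In characteristic two both maps are
additive, `ker φ = {0, 1}` and `R ∘ R = 0`; since `ker R = {a | a ^ q = a}` has at most `q`
elements, `R` maps `k₂` onto the subfield `k = ker R` of order `q`. As `R ∘ φ = φ ∘ R`, the
image `T` of `φ` lies in `R⁻¹ S` with `S = φ k` of order `q / 2`, and comparing cardinalities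
gives `T = R⁻¹ S`. The count is `2 #(C ∩ T)` for the set `C` of nonzero cubes, of order
`(q ^ 2 - 1) / 3`.

As `f` is odd, `3 ∣ 2 q - 1`, so every `a ∈ kˣ` is the cube of `a ^ ((2 q - 1) / 3)`, and `kˣ`
permutes `C` by multiplication. Because `R (a t) = a R t` for `a ∈ k`, the number of `a ∈ kˣ`
with `a t ∈ T` is `q - 1` if `R t = 0` and `#S - 1` otherwise. Double counting the pairs
`(a, t) ∈ kˣ × C` with `a t ∈ T` gives
`(q - 1) #(C ∩ T) = (q - 1) ^ 2 + (#C - (q - 1)) (#S - 1)`.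
-/

open Finset Polynomial

theorem AddMonoidHom.card_filter_apply_mem {G H : Type*} [AddGroup G] [Fintype G] [AddGroup H]
    [DecidableEq H] (f : G →+ H) {s : Finset H} (hs : ∀ y ∈ s, y ∈ f.range) :
    #{x | f x ∈ s} = #s * Nat.card f.ker := by
  have hker : #{x | f x = 0} = Nat.card f.ker := by
    rw [Nat.card_eq_fintype_card, Fintype.card_subtype]
    simp only [AddMonoidHom.mem_ker]
  rw [card_eq_sum_card_fiberwise (s := {x | f x ∈ s}) (t := s) (f := f)
    fun x hx => (mem_filter.mp hx).2, ← smul_eq_mul, ← sum_const]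
  refine sum_congr rfl fun y hy => ?_
  rw [filter_filter, ← hker, ← card_fiber_eq_of_mem_range f (hs y hy) ⟨0, map_zero f⟩]
  congr 1
  ext x
  simp only [mem_filter, mem_univ, true_and, and_iff_right_iff_imp]
  rintro rfl
  exact hy

theorem AddSubgroup.card_comap_of_le_range {G H : Type*} [AddGroup G] [Fintype G] [AddGroup H]
    [Fintype H] (f : G →+ H) {B : AddSubgroup H} (hB : B ≤ f.range) :
    Nat.card (B.comap f) = Nat.card B * Nat.card f.ker := by
  classical
  rw [Nat.card_eq_fintype_card, Fintype.card_subtype, Nat.card_eq_fintype_card (α := B),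
    Fintype.card_subtype]
  simpa using f.card_filter_apply_mem (s := {y | y ∈ B}) fun y hy => hB (by simpa using hy)

theorem AddMonoidHom.range_eq_ker_of_apply_apply_eq_zero {G : Type*} [AddGroup G] [Finite G]
    (f : G →+ G) (hff : ∀ x, f (f x) = 0) (hker : Nat.card f.ker ^ 2 ≤ Nat.card G) :
    f.range = f.ker := by
  have hle : f.range ≤ f.ker := by
    rintro _ ⟨x, rfl⟩
    exact hff x
  have hcard : Nat.card f.ker * Nat.card f.range = Nat.card G := by
    rw [← AddSubgroup.index_ker, AddSubgroup.card_mul_index]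
  refine AddSubgroup.eq_of_le_of_card_ge hle ?_
  nlinarith [AddSubgroup.card_le_of_le hle]

theorem one_lt_of_card_eq_sq {α : Type*} [Fintype α] [Nontrivial α] {q : ℕ}
    (hα : Fintype.card α = q ^ 2) : 1 < q := by
  have := hα ▸ Fintype.one_lt_card (α := α)
  by_contra! hq
  nlinarith

theorem Finset.sum_card_filter_apply_eq_card_mul {ι α : Type*} [DecidableEq α] (A : Finset ι)
    (X : Finset α) (p : α → Prop) [DecidablePred p] (g : ι → α → α)
    (hmaps : ∀ i ∈ A, ∀ x ∈ X, g i x ∈ X) (hinj : ∀ i ∈ A, Set.InjOn (g i) X) :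
    ∑ x ∈ X, #{i ∈ A | p (g i x)} = #A * #{x ∈ X | p x} := by
  have hfiber (i) (hi : i ∈ A) : #{x ∈ X | p (g i x)} = #{x ∈ X | p x} := by
    have himage : X.image (g i) = X := eq_of_subset_of_card_le
      (image_subset_iff.mpr (hmaps i hi)) (card_image_of_injOn (hinj i hi)).ge
    rw [← card_image_of_injOn ((hinj i hi).mono (filter_subset _ X)), ← filter_image, himage]
  calc ∑ x ∈ X, #{i ∈ A | p (g i x)}
      = ∑ i ∈ A, #{x ∈ X | p (g i x)} :=
        sum_card_bipartiteAbove_eq_sum_card_bipartiteBelow (r := fun x i => p (g i x))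
    _ = #A * #{x ∈ X | p x} := by
        rw [sum_congr rfl hfiber, sum_const, smul_eq_mul]

theorem IsPrimitiveRoot.card_image_pow_mul {K : Type*} [Field K] [Fintype K] [DecidableEq K]
    {ζ : K} {m : ℕ} (hζ : IsPrimitiveRoot ζ m) (hm : 0 < m) :
    #((univ.erase (0 : K)).image (· ^ m)) * m = Fintype.card K - 1 := by
  have hfiber : ∀ b ∈ (univ.erase (0 : K)).image (· ^ m),
      #{x ∈ univ.erase (0 : K) | x ^ m = b} = m := by
    intro b hb
    obtain ⟨c, hc, rfl⟩ := mem_image.mp hb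
    have hc0 : c ^ m ≠ 0 := pow_ne_zero m (ne_of_mem_erase hc)
    have : {x ∈ univ.erase (0 : K) | x ^ m = c ^ m} = (nthRoots m (c ^ m)).toFinset := by
      ext x
      simp only [mem_filter, mem_erase, mem_univ, and_true, Multiset.mem_toFinset,
        mem_nthRoots hm]
      exact and_iff_right_of_imp fun hx h0 => hc0 (by rw [← hx, h0, zero_pow hm.ne'])
    rw [this, Multiset.toFinset_card_of_nodup (hζ.nthRoots_nodup hc0), hζ.card_nthRoots,
      if_pos ⟨c, rfl⟩]
  rw [← sum_const_nat hfiber, ← card_eq_sum_card_image, card_erase_of_mem (mem_univ 0),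
    card_univ]

theorem pow_div_three_pow_three {M : Type*} [Monoid M] {a : M} {q : ℕ} (hq : 1 ≤ q)
    (h3 : 3 ∣ 2 * q - 1) (ha : a ^ q = a) : (a ^ ((2 * q - 1) / 3)) ^ 3 = a := by
  rw [← pow_mul, Nat.div_mul_cancel h3, show 2 * q - 1 = q - 1 + q by omega, pow_add, ha,
    ← pow_succ, Nat.sub_add_cancel hq, ha]

theorem exists_isPrimitiveRoot_of_prime_dvd_card_sub_one {K : Type*} [Field K] [Fintype K]
    {p : ℕ} [Fact p.Prime] (hp : p ∣ Fintype.card K - 1) :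
    ∃ ζ : K, IsPrimitiveRoot ζ p := by
  obtain ⟨ζ, hζ⟩ := exists_prime_orderOf_dvd_card' (G := Kˣ) p
    (by rwa [Nat.card_units, Nat.card_eq_fintype_card])
  exact ⟨ζ, IsPrimitiveRoot.coe_units_iff.mpr (hζ ▸ IsPrimitiveRoot.orderOf ζ)⟩

theorem card_cubes_mul_three {K : Type*} [Field K] [Fintype K] [DecidableEq K] {n : ℕ}
    (hK : Fintype.card K = (2 ^ n) ^ 2) :
    #((univ.erase (0 : K)).image (· ^ 3)) * 3 = (2 ^ n) ^ 2 - 1 := by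
  have h3 : 3 ∣ Fintype.card K - 1 := by
    rw [hK]
    simpa [← pow_mul, pow_mul'] using Nat.sub_dvd_pow_sub_pow 4 1 n
  obtain ⟨ζ, hζ⟩ := exists_isPrimitiveRoot_of_prime_dvd_card_sub_one h3
  rw [hζ.card_image_pow_mul three_pos, hK]

theorem three_dvd_two_mul_two_pow_sub_one {f : ℕ} (hf : Odd f) : 3 ∣ 2 * 2 ^ f - 1 := by
  obtain ⟨k, rfl⟩ := hf
  rw [← pow_succ', show 2 * k + 1 + 1 = 2 * (k + 1) by ring, pow_mul]
  simpa using Nat.sub_dvd_pow_sub_pow 4 1 (k + 1)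

section CharTwo

variable (K : Type*) [Field K] [CharP K 2]

def artinSchreier : K →+ K where
  toFun y := y + y ^ 2
  map_zero' := by simp
  map_add' x y := by rw [CharTwo.add_sq]; ring

-- when `Fintype.card K = (2 ^ n) ^ 2`, this is the trace to the subfield of order `2 ^ n`
def relTrace (n : ℕ) : K →+ K where
  toFun x := x ^ 2 ^ n + x
  map_zero' := by simp
  map_add' x y := by rw [add_pow_char_pow]; ring

variable {K} {n : ℕ}

theorem artinSchreier_apply (y : K) : artinSchreier K y = y + y ^ 2 := rfl

theorem relTrace_apply (x : K) : relTrace K n x = x ^ 2 ^ n + x := rfl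

theorem mem_ker_artinSchreier {y : K} : y ∈ (artinSchreier K).ker ↔ y = 0 ∨ y = 1 := by
  have hfactor : y + y ^ 2 = y * (y + 1) := by ring
  rw [AddMonoidHom.mem_ker, artinSchreier_apply, hfactor, mul_eq_zero, CharTwo.add_eq_zero]

theorem card_ker_artinSchreier [Fintype K] : Nat.card (artinSchreier K).ker = 2 := by
  classical
  rw [Nat.card_eq_fintype_card, Fintype.card_subtype, ← card_pair (zero_ne_one' K)]
  congr 1
  ext y
  simp only [mem_filter, mem_univ, true_and, mem_insert, mem_singleton]
  exact mem_ker_artinSchreier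

theorem relTrace_eq_zero_iff {x : K} : relTrace K n x = 0 ↔ x ^ 2 ^ n = x := by
  rw [relTrace_apply, CharTwo.add_eq_zero]

theorem ker_artinSchreier_le_ker_relTrace : (artinSchreier K).ker ≤ (relTrace K n).ker := by
  intro y hy
  rcases mem_ker_artinSchreier.mp hy with rfl | rfl <;>
    simp [relTrace_apply, CharTwo.add_self_eq_zero]

theorem relTrace_artinSchreier (y : K) :
    relTrace K n (artinSchreier K y) = artinSchreier K (relTrace K n y) := by
  simp only [relTrace_apply, artinSchreier_apply, add_pow_char_pow, CharTwo.add_sq]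
  ring

theorem relTrace_mul {a : K} (ha : relTrace K n a = 0) (x : K) :
    relTrace K n (a * x) = a * relTrace K n x := by
  rw [relTrace_eq_zero_iff] at ha
  simp only [relTrace_apply, mul_pow, ha]
  ring

theorem relTrace_inv {a : K} (ha : relTrace K n a = 0) : relTrace K n a⁻¹ = 0 := by
  rw [relTrace_eq_zero_iff] at ha ⊢
  rw [inv_pow, ha]

theorem map_artinSchreier_ker_relTrace_le :
    (relTrace K n).ker.map (artinSchreier K) ≤ (relTrace K n).ker := by
  rintro _ ⟨a, ha, rfl⟩
  rw [SetLike.mem_coe, AddMonoidHom.mem_ker] at ha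
  rw [AddMonoidHom.mem_ker, relTrace_artinSchreier, ha, map_zero]

theorem mem_cubes_of_relTrace_eq_zero [Fintype K] [DecidableEq K] (h3 : 3 ∣ 2 * 2 ^ n - 1)
    {a : K} (ha0 : a ≠ 0) (ha : relTrace K n a = 0) : a ∈ (univ.erase 0).image (· ^ 3) := by
  have hcube := pow_div_three_pow_three Nat.one_le_two_pow h3 (relTrace_eq_zero_iff.mp ha)
  refine mem_image.mpr ⟨_, mem_erase.mpr ⟨fun h0 => ha0 ?_, mem_univ _⟩, hcube⟩
  rw [← hcube, h0, zero_pow three_ne_zero]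

theorem filter_cubes_relTrace_eq_zero [Fintype K] [DecidableEq K] (h3 : 3 ∣ 2 * 2 ^ n - 1) :
    {t ∈ (univ.erase (0 : K)).image (· ^ 3) | relTrace K n t = 0} =
      ({a : K | a ≠ 0 ∧ relTrace K n a = 0} : Finset K) := by
  ext t
  simp only [mem_filter, mem_univ, true_and]
  refine ⟨fun ⟨ht, hR⟩ => ⟨?_, hR⟩,
    fun ⟨ht0, hR⟩ => ⟨mem_cubes_of_relTrace_eq_zero h3 ht0 hR, hR⟩⟩
  obtain ⟨c, hc, rfl⟩ := mem_image.mp ht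
  exact pow_ne_zero 3 (ne_of_mem_erase hc)

theorem card_filter_artinSchreier_mem [Fintype K] [DecidableEq K] (s : Finset K) :
    #{y | artinSchreier K y ∈ s} = #{t ∈ s | t ∈ (artinSchreier K).range} * 2 := by
  rw [← card_ker_artinSchreier (K := K),
    ← (artinSchreier K).card_filter_apply_mem fun t ht => (mem_filter.mp ht).2]
  simp

theorem card_filter_mul_mem_eq [Fintype K] [DecidableEq K] {r : K} (hr0 : r ≠ 0)
    (hr : relTrace K n r = 0) (p : K → Prop) [DecidablePred p] :
    #{a ∈ ({a : K | a ≠ 0 ∧ relTrace K n a = 0} : Finset K) | p (a * r)} =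
      #{a ∈ ({a : K | a ≠ 0 ∧ relTrace K n a = 0} : Finset K) | p a} := by
  have hmul {a b : K} (ha0 : a ≠ 0) (ha : relTrace K n a = 0) (hb0 : b ≠ 0)
      (hb : relTrace K n b = 0) : a * b ≠ 0 ∧ relTrace K n (a * b) = 0 :=
    ⟨mul_ne_zero ha0 hb0, by rw [relTrace_mul ha, hb, mul_zero]⟩
  refine card_nbij' (· * r) (· * r⁻¹) ?_ ?_ ?_ ?_
  · intro a ha
    simp only [mem_coe, mem_filter, mem_univ, true_and] at ha ⊢
    exact ⟨hmul ha.1.1 ha.1.2 hr0 hr, ha.2⟩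
  · intro b hb
    simp only [mem_coe, mem_filter, mem_univ, true_and] at hb ⊢
    rw [inv_mul_cancel_right₀ hr0]
    exact ⟨hmul hb.1.1 hb.1.2 (inv_ne_zero hr0) (relTrace_inv hr), hb.2⟩
  · exact fun a _ => mul_inv_cancel_right₀ hr0 a
  · exact fun b _ => inv_mul_cancel_right₀ hr0 b

open scoped Classical in
theorem card_filter_ne_zero_mem_map_artinSchreier [Fintype K] [DecidableEq K] :
    #{a ∈ ({a : K | a ≠ 0 ∧ relTrace K n a = 0} : Finset K) |
        a ∈ (relTrace K n).ker.map (artinSchreier K)} =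
      Nat.card ((relTrace K n).ker.map (artinSchreier K)) - 1 := by
  set S := (relTrace K n).ker.map (artinSchreier K)
  have hS : ({a ∈ ({a : K | a ≠ 0 ∧ relTrace K n a = 0} : Finset K) | a ∈ S} : Finset K) =
      ({b | b ∈ S} : Finset K).erase 0 := by
    ext b
    simp only [mem_filter, mem_erase, mem_univ, true_and]
    exact ⟨fun h => ⟨h.1.1, h.2⟩,
      fun h => ⟨⟨h.1, map_artinSchreier_ker_relTrace_le h.2⟩, h.2⟩⟩
  rw [hS, card_erase_of_mem (by simp), Nat.card_eq_fintype_card, Fintype.card_subtype]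

theorem card_artinSchreier_mem_cubes [Fintype K] [DecidableEq K] :
    Nat.card {y : K // ∃ c : K, c ≠ 0 ∧ y + y ^ 2 = c ^ 3} =
      #{t ∈ (univ.erase (0 : K)).image (· ^ 3) | t ∈ (artinSchreier K).range} * 2 := by
  classical
  rw [Nat.card_eq_fintype_card, Fintype.card_subtype, ← card_filter_artinSchreier_mem]
  simp [artinSchreier_apply, eq_comm]

variable [Fintype K] (hK : Fintype.card K = (2 ^ n) ^ 2)
include hK

theorem relTrace_relTrace (x : K) : relTrace K n (relTrace K n x) = 0 := by
  rw [relTrace_apply, relTrace_apply, add_pow_char_pow, ← pow_mul, ← sq, ← hK,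
    FiniteField.pow_card]
  linear_combination (x + x ^ 2 ^ n) * CharTwo.two_eq_zero (R := K)

theorem card_ker_relTrace_le : Nat.card (relTrace K n).ker ≤ 2 ^ n := by
  classical
  have hq := one_lt_of_card_eq_sq hK
  rw [Nat.card_eq_fintype_card, Fintype.card_subtype,
    ← FiniteField.X_pow_card_sub_X_natDegree_eq K hq]
  refine card_le_degree_of_subset_roots fun x hx => ?_
  rw [mem_roots (FiniteField.X_pow_card_sub_X_ne_zero K hq)]
  simpa [sub_eq_zero, ← relTrace_eq_zero_iff] using hx

theorem range_relTrace : (relTrace K n).range = (relTrace K n).ker :=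
  AddMonoidHom.range_eq_ker_of_apply_apply_eq_zero _ (relTrace_relTrace hK) <| by
    rw [Nat.card_eq_fintype_card (α := K), hK]
    exact Nat.pow_le_pow_left (card_ker_relTrace_le hK) 2

theorem card_ker_relTrace : Nat.card (relTrace K n).ker = 2 ^ n := by
  have hcard := (relTrace K n).ker.card_mul_index
  rw [AddSubgroup.index_ker, range_relTrace hK, Nat.card_eq_fintype_card (α := K), hK,
    ← sq] at hcard
  exact Nat.pow_left_injective two_ne_zero hcard

theorem card_filter_ne_zero_relTrace_eq_zero [DecidableEq K] :
    #{a : K | a ≠ 0 ∧ relTrace K n a = 0} = 2 ^ n - 1 := by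
  have hF : ({a : K | a ≠ 0 ∧ relTrace K n a = 0} : Finset K) =
      ({a : K | relTrace K n a = 0} : Finset K).erase 0 := by
    ext a
    simp only [mem_filter, mem_erase, mem_univ, true_and]
  rw [hF, card_erase_of_mem (by simp [map_zero]), ← card_ker_relTrace hK,
    Nat.card_eq_fintype_card, Fintype.card_subtype]
  simp only [AddMonoidHom.mem_ker]

theorem card_map_artinSchreier_ker_relTrace :
    Nat.card ((relTrace K n).ker.map (artinSchreier K)) * 2 = 2 ^ n := by
  have hcard := AddSubgroup.card_comap_of_le_range (artinSchreier K)
    ((relTrace K n).ker.map_le_range (artinSchreier K))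
  rw [AddSubgroup.comap_map_eq, sup_eq_left.mpr ker_artinSchreier_le_ker_relTrace,
    card_ker_relTrace hK, card_ker_artinSchreier] at hcard
  exact hcard.symm

theorem range_artinSchreier : (artinSchreier K).range =
    ((relTrace K n).ker.map (artinSchreier K)).comap (relTrace K n) := by
  refine AddSubgroup.eq_of_le_of_card_ge ?_ ?_
  · rintro _ ⟨y, rfl⟩
    rw [AddSubgroup.mem_comap, relTrace_artinSchreier]
    exact AddSubgroup.mem_map_of_mem _ (range_relTrace hK ▸ ⟨y, rfl⟩)
  · have hrange := (artinSchreier K).ker.card_mul_index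
    rw [AddSubgroup.index_ker, card_ker_artinSchreier, Nat.card_eq_fintype_card (α := K),
      hK] at hrange
    rw [AddSubgroup.card_comap_of_le_range _
      (map_artinSchreier_ker_relTrace_le.trans (range_relTrace hK).ge), card_ker_relTrace hK]
    nlinarith [card_map_artinSchreier_ker_relTrace hK]

theorem card_filter_mul_mem_range_artinSchreier [DecidableEq K] (t : K) :
    #{a ∈ ({a : K | a ≠ 0 ∧ relTrace K n a = 0} : Finset K) |
        a * t ∈ (artinSchreier K).range} =
      if relTrace K n t = 0 then 2 ^ n - 1
      else Nat.card ((relTrace K n).ker.map (artinSchreier K)) - 1 := by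
  classical
  have hmem {a : K} (ha : relTrace K n a = 0) : a * t ∈ (artinSchreier K).range ↔
      a * relTrace K n t ∈ (relTrace K n).ker.map (artinSchreier K) := by
    rw [range_artinSchreier hK, AddSubgroup.mem_comap, relTrace_mul ha]
  rw [filter_congr fun a ha => hmem (mem_filter.mp ha).2.2]
  split_ifs with ht
  · simp only [ht, mul_zero, AddSubgroup.zero_mem, filter_true,
      card_filter_ne_zero_relTrace_eq_zero hK]
  · have hr : relTrace K n (relTrace K n t) = 0 := relTrace_relTrace hK t
    rw [card_filter_mul_mem_eq ht hr (· ∈ (relTrace K n).ker.map (artinSchreier K)),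
      card_filter_ne_zero_mem_map_artinSchreier]

theorem sub_one_mul_card_cubes_inter_range_artinSchreier [DecidableEq K]
    (h3 : 3 ∣ 2 * 2 ^ n - 1) :
    (2 ^ n - 1) * #{t ∈ (univ.erase (0 : K)).image (· ^ 3) | t ∈ (artinSchreier K).range} =
      (2 ^ n - 1) * (2 ^ n - 1) +
        #{t ∈ (univ.erase (0 : K)).image (· ^ 3) | relTrace K n t ≠ 0} *
          (Nat.card ((relTrace K n).ker.map (artinSchreier K)) - 1) := by
  set C := (univ.erase (0 : K)).image (· ^ 3)
  set F : Finset K := {a | a ≠ 0 ∧ relTrace K n a = 0}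
  have hmaps : ∀ a ∈ F, ∀ x ∈ C, a * x ∈ C := by
    intro a ha x hx
    obtain ⟨ha0, haR⟩ := (mem_filter.mp ha).2
    obtain ⟨b, hb, rfl⟩ := mem_image.mp (mem_cubes_of_relTrace_eq_zero h3 ha0 haR)
    obtain ⟨c, hc, rfl⟩ := mem_image.mp hx
    exact mem_image.mpr ⟨b * c, mem_erase.mpr ⟨mul_ne_zero (ne_of_mem_erase hb)
      (ne_of_mem_erase hc), mem_univ _⟩, mul_pow b c 3⟩
  have hinj : ∀ a ∈ F, Set.InjOn (a * ·) C := fun a ha =>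
    (mul_right_injective₀ (mem_filter.mp ha).2.1).injOn
  have hcount :=
    sum_card_filter_apply_eq_card_mul F C (· ∈ (artinSchreier K).range) (· * ·) hmaps hinj
  have hCF : {t ∈ C | relTrace K n t = 0} = F := filter_cubes_relTrace_eq_zero h3
  rw [sum_congr rfl fun t _ => card_filter_mul_mem_range_artinSchreier hK t, sum_ite, sum_const,
    sum_const, smul_eq_mul, smul_eq_mul, hCF, card_filter_ne_zero_relTrace_eq_zero hK] at hcount
  exact hcount.symm

theorem card_cubes_inter_range_artinSchreier [DecidableEq K] (h3 : 3 ∣ 2 * 2 ^ n - 1) :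
    (#{t ∈ (univ.erase (0 : K)).image (· ^ 3) | t ∈ (artinSchreier K).range} * 2 : ℚ) =
      ((2 ^ n : ℚ) ^ 2 + 2 * 2 ^ n - 2) / 3 := by
  set C := (univ.erase (0 : K)).image (· ^ 3)
  have hsplit : #{t ∈ C | relTrace K n t = 0} + #{t ∈ C | relTrace K n t ≠ 0} = #C :=
    card_filter_add_card_filter_not _
  rw [filter_cubes_relTrace_eq_zero h3, card_filter_ne_zero_relTrace_eq_zero hK] at hsplit
  have hC := card_cubes_mul_three hK
  have hS := card_map_artinSchreier_ker_relTrace hK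
  have hcount : (2 ^ n - 1) * #{t ∈ C | t ∈ (artinSchreier K).range} = _ :=
    sub_one_mul_card_cubes_inter_range_artinSchreier hK h3
  have hq := one_lt_of_card_eq_sq hK
  have hs : 1 ≤ Nat.card ((relTrace K n).ker.map (artinSchreier K)) := by omega
  have hQ : (2 : ℚ) ^ n - 1 ≠ 0 := by
    have : (2 : ℚ) ≤ 2 ^ n := by exact_mod_cast hq
    linarith
  qify [hq.le, hs, Nat.one_le_pow 2 (2 ^ n) (by omega)] at hC hsplit hS hcount
  rw [← mul_right_inj' hQ]
  linear_combination 2 * hcount + (#{t ∈ C | relTrace K n t ≠ 0} : ℚ) * hS +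
    ((2 : ℚ) ^ n - 2) * hsplit + ((2 : ℚ) ^ n - 2) / 3 * hC

end CharTwo

/-- Let `q = 2^f` with `f` odd and let `k₂37 = F_{q²}`. Then the number `N₁` of elements
`y ∈ k₂` such that `y + y²` is a nonzero cube in `k₂ˣ` equals `(q² + 2q − 2)/3`. -/
theorem card_trace_cube_count (f : ℕ) (hf : Odd f) (k₂ : Type*) [Field k₂] [Fintype k₂]
    (hcard : Fintype.card k₂ = (2 ^ f) ^ 2) :
    (Nat.card {y : k₂ // ∃ c : k₂, c ≠ 0 ∧ y + y ^ 2 = c ^ 3} : ℚ) =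
      ((2 ^ f : ℚ) ^ 2 + 2 * 2 ^ f - 2) / 3 := by
  classical
  have : CharP k₂ 2 := charP_of_card_eq_prime_pow (hcard.trans (pow_mul 2 f 2).symm)
  rw [card_artinSchreier_mem_cubes, Nat.cast_mul, Nat.cast_two,
    card_cubes_inter_range_artinSchreier hcard (three_dvd_two_mul_two_pow_sub_one hf)]
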